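/- Let V be the Voronoi cell of 0 of a full-rank lattice Λ in R^n, with covering radius r̄_1, and let Λ_2 ⊂ Λ be a sublattice with inscribed radius r_2. If x ∈ V_{Λ_2}(0) is at distance greater than r̄_1 from the boundary of V_{Λ_2}(0), then the nearest Λ-point Q_Λ(x) lies in V_{Λ_2}(0). Consequently, the interior of γ·V_{Λ_2}(0) with γ = 1 − r̄_1/r_2 is contained in ∪_{λ ∈ V_{Λ_2}(0) ∩ Λ} V_Λ(λ), provided γ > 0. -/

import Mathlib

open MeasureTheory Pointwise

/-- The (closed) Voronoi region of the origin for a set of lattice points `L`. -/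
def cVor (n : ℕ) (L : Set (EuclideanSpace ℝ (Fin n))) : Set (EuclideanSpace ℝ (Fin n)) :=
  {x | ∀ l ∈ L, ‖x‖ ≤ ‖x - l‖}

/-!
The Voronoi cell `V` of `Λ₂` is a closed convex set containing the closed ball of radius `r₂`.
A point `x ∈ V` farther than `r̄₁` from `∂V` sees its whole `r̄₁`-ball inside `V`, since that
ball is connected and misses `∂V`; in particular `Q_Λ(x) ∈ V`. For the second claim, if `y = γ v`
with `v ∈ V` and `‖z - y‖ ≤ r̄₁ = (1 - γ) r₂`, then `z = γ v + (1 - γ) u` with `‖u‖ ≤ r₂`, so `z ∈ V`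
by convexity; apply this to the lattice point `z` whose cell contains `y`.
-/

open Metric Set

theorem IsPreconnected.subset_of_disjoint_frontier {X : Type*} [TopologicalSpace X]
    {S s : Set X} (hS : IsPreconnected S) (hfr : Disjoint S (frontier s))
    (hSs : (S ∩ s).Nonempty) : S ⊆ s := by
  have hcover : S ⊆ interior s ∪ (closure s)ᶜ := fun y hy => by
    by_cases hy' : y ∈ closure s
    · exact .inl (by_contra fun hyi => hfr.notMem_of_mem_left hy ⟨hy', hyi⟩)
    · exact .inr hy'
  obtain ⟨x, hxS, hxs⟩ := hSs
  have hx : x ∈ interior s := (hcover hxS).resolve_right (not_not.2 (subset_closure hxs))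
  refine (hS.subset_left_of_subset_union isOpen_interior isClosed_closure.isOpen_compl
    (disjoint_compl_right.mono_left interior_subset_closure) hcover ⟨x, hxS, hx⟩).trans ?_
  exact interior_subset

theorem mem_of_dist_lt_infDist_frontier {E : Type*} [NormedAddCommGroup E] [NormedSpace ℝ E]
    {s : Set E} {x y : E} (hx : x ∈ s) (hxy : dist x y < infDist x (frontier s)) : y ∈ s :=
  (convex_ball x _).isPreconnected.subset_of_disjoint_frontier disjoint_ball_infDist
    ⟨x, mem_ball_self (dist_nonneg.trans_lt hxy), hx⟩ (mem_ball'.2 hxy)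

theorem Convex.smul_add_closedBall_subset {E : Type*} [NormedAddCommGroup E] [NormedSpace ℝ E]
    {s : Set E} (hs : Convex ℝ s) {r t : ℝ} (hr : 0 ≤ r) (ht₀ : 0 ≤ t) (ht₁ : t ≤ 1)
    (hball : closedBall 0 r ⊆ s) : (1 - t) • s + closedBall 0 (t * r) ⊆ s := by
  have hscale : closedBall (0 : E) (t * r) = t • closedBall 0 r := by
    rw [smul_closedBall t 0 hr, smul_zero, Real.norm_of_nonneg ht₀]
  rw [hscale]
  exact (add_subset_add_left (smul_set_mono hball)).trans
    (hs.set_combo_subset (sub_nonneg.2 ht₁) ht₀ (sub_add_cancel 1 t))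

theorem norm_le_norm_sub_iff_inner_le {E : Type*} [NormedAddCommGroup E] [InnerProductSpace ℝ E]
    (x l : E) : ‖x‖ ≤ ‖x - l‖ ↔ inner ℝ l x ≤ ‖l‖ ^ 2 / 2 := by
  rw [← sq_le_sq₀ (norm_nonneg _) (norm_nonneg _), norm_sub_sq_real, real_inner_comm]
  constructor <;> intro h <;> linarith

theorem cVor_eq_iInter_halfSpace (n : ℕ) (L : Set (EuclideanSpace ℝ (Fin n))) :
    cVor n L = ⋂ l ∈ L, {x | inner ℝ l x ≤ ‖l‖ ^ 2 / 2} := by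
  ext x
  simp only [cVor, mem_ofPred_eq, mem_iInter, norm_le_norm_sub_iff_inner_le]

theorem convex_cVor (n : ℕ) (L : Set (EuclideanSpace ℝ (Fin n))) : Convex ℝ (cVor n L) := by
  rw [cVor_eq_iInter_halfSpace]
  exact convex_iInter₂ fun l _ => convex_halfSpace_le (innerₛₗ ℝ l).isLinear _

theorem isClosed_cVor (n : ℕ) (L : Set (EuclideanSpace ℝ (Fin n))) : IsClosed (cVor n L) := by
  rw [cVor_eq_iInter_halfSpace]
  exact isClosed_biInter fun l _ => isClosed_le (innerSL ℝ l).continuous continuous_const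

theorem closedBall_subset_cVor {n : ℕ} {L : Set (EuclideanSpace ℝ (Fin n))} {r : ℝ} (hr : 0 < r)
    (hball : ball 0 r ⊆ cVor n L) : closedBall 0 r ⊆ cVor n L := by
  rw [← closure_ball 0 hr.ne']
  exact closure_minimal hball (isClosed_cVor n L)

theorem stmt13_general (n : ℕ)
    (Λ Λ2 : AddSubgroup (EuclideanSpace ℝ (Fin n)))
    (Q : EuclideanSpace ℝ (Fin n) → EuclideanSpace ℝ (Fin n))
    (rbar1 r2 : ℝ) (hr2pos : 0 < r2)
    (hQmem : ∀ x, Q x ∈ Λ)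
    (hQcov : ∀ x, ‖x - Q x‖ ≤ rbar1)
    (hr2 : Metric.ball 0 r2 ⊆ cVor n (Λ2 : Set (EuclideanSpace ℝ (Fin n))))
    (cells : EuclideanSpace ℝ (Fin n) → Set (EuclideanSpace ℝ (Fin n)))
    (hpart : ∀ x : EuclideanSpace ℝ (Fin n), ∃! l, l ∈ Λ ∧ x ∈ cells l)
    (hcells : ∀ l ∈ Λ, ∀ x ∈ cells l, ∀ m ∈ Λ, ‖x - l‖ ≤ ‖x - m‖)
    (γ : ℝ) (hγ : γ = 1 - rbar1 / r2) (hγpos : 0 < γ) :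
    (∀ x ∈ cVor n (Λ2 : Set (EuclideanSpace ℝ (Fin n))),
        rbar1 < Metric.infDist x (frontier (cVor n (Λ2 : Set (EuclideanSpace ℝ (Fin n))))) →
        Q x ∈ cVor n (Λ2 : Set (EuclideanSpace ℝ (Fin n)))) ∧
      interior (γ • cVor n (Λ2 : Set (EuclideanSpace ℝ (Fin n)))) ⊆
        ⋃ l ∈ cVor n (Λ2 : Set (EuclideanSpace ℝ (Fin n))) ∩ (Λ : Set (EuclideanSpace ℝ (Fin n))),
          cells l := by
  refine ⟨fun x hx hfar => mem_of_dist_lt_infDist_frontier hx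
    ((dist_eq_norm x (Q x) ▸ hQcov x).trans_lt hfar), fun y hy => ?_⟩
  obtain ⟨l, ⟨hlΛ, hyl⟩, -⟩ := hpart y
  have hly : ‖l - y‖ ≤ rbar1 / r2 * r2 := by
    rw [div_mul_cancel₀ _ hr2pos.ne', norm_sub_rev]
    exact (hcells l hlΛ y hyl (Q y) (hQmem y)).trans (hQcov y)
  have hlV : l ∈ cVor n Λ2 := by
    have hsum := add_mem_add (hγ ▸ interior_subset hy) (mem_closedBall_zero_iff.2 hly)
    rw [add_sub_cancel] at hsum
    exact (convex_cVor n _).smul_add_closedBall_subset hr2pos.le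
      (div_nonneg ((norm_nonneg _).trans (hQcov 0)) hr2pos.le) (by linarith)
      (closedBall_subset_cVor hr2pos hr2) hsum
  exact mem_biUnion ⟨hlV, hlΛ⟩ hyl

/-- If `x ∈ V_{Λ₂}(0)` is at distance greater than `r̄₁` (covering radius of `Λ`) from the
boundary of `V_{Λ₂}(0)`, then `Q_Λ(x) ∈ V_{Λ₂}(0)`; consequently, with
`γ = 1 − r̄₁/r₂ > 0` (`r₂` the inscribed radius of `Λ₂`), the interior of `γ·V_{Λ₂}(0)` is
contained in `∪_{λ ∈ V_{Λ₂}(0) ∩ Λ} V_Λ(λ)`. -/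
theorem stmt13 (n : ℕ)
    (Λ Λ2 : AddSubgroup (EuclideanSpace ℝ (Fin n)))
    (hnest : Λ2 ≤ Λ)
    (Q : EuclideanSpace ℝ (Fin n) → EuclideanSpace ℝ (Fin n))
    (rbar1 r2 : ℝ) (hr2pos : 0 < r2)
    (hQmem : ∀ x, Q x ∈ Λ)
    (hQnear : ∀ x, ∀ l ∈ Λ, ‖x - Q x‖ ≤ ‖x - l‖)
    (hQcov : ∀ x, ‖x - Q x‖ ≤ rbar1)
    (hr2 : Metric.ball 0 r2 ⊆ cVor n (Λ2 : Set (EuclideanSpace ℝ (Fin n))))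
    (cells : EuclideanSpace ℝ (Fin n) → Set (EuclideanSpace ℝ (Fin n)))
    (hpart : ∀ x : EuclideanSpace ℝ (Fin n), ∃! l, l ∈ Λ ∧ x ∈ cells l)
    (hcells : ∀ l ∈ Λ, ∀ x ∈ cells l, ∀ m ∈ Λ, ‖x - l‖ ≤ ‖x - m‖)
    (γ : ℝ) (hγ : γ = 1 - rbar1 / r2) (hγpos : 0 < γ) :
    (∀ x ∈ cVor n (Λ2 : Set (EuclideanSpace ℝ (Fin n))),
        rbar1 < Metric.infDist x (frontier (cVor n (Λ2 : Set (EuclideanSpace ℝ (Fin n))))) →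
        Q x ∈ cVor n (Λ2 : Set (EuclideanSpace ℝ (Fin n)))) ∧
      interior (γ • cVor n (Λ2 : Set (EuclideanSpace ℝ (Fin n)))) ⊆
        ⋃ l ∈ cVor n (Λ2 : Set (EuclideanSpace ℝ (Fin n))) ∩ (Λ : Set (EuclideanSpace ℝ (Fin n))),
          cells l :=
  stmt13_general n Λ Λ2 Q rbar1 r2 hr2pos hQmem hQcov hr2 cells hpart hcells γ hγ hγpos
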